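/- Let A be a d×d binary matrix whose digraph has the property that every cycle passes through a right-free vertex, and let x = x_1⋯x_{n+1} ∈ P_n be a based closed walk containing at least two right-free vertices, with x_s the first and x_r the second right-free position. Then r − s = l if and only if x ∈ L(P_{n−l}, Ξ_l), where L and Ξ are as defined by insertion after the first right-free vertex. -/

import Mathlib

open Matrix Polynomial

/-- `i → j` is an edge in the digraph of the binary matrix `A`. -/
def adjB {d : ℕ} (A : Fin d → Fin d → Bool) (i j : Fin d) : Prop := A i j = true

/-- `i` is a right free generator: its row of `A` is all ones. -/
def rfB {d : ℕ} (A : Fin d → Fin d → Bool) (i : Fin d) : Prop := ∀ j, A i j = true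

/-- The letter at position `s` (0-based) of the word `l` is right free. -/
def rfAt {d : ℕ} (A : Fin d → Fin d → Bool) (l : List (Fin d)) (s : ℕ) : Prop :=
  ∃ h : s < l.length, rfB A (l.get ⟨s, h⟩)

/-- `l` is a based closed walk of length `n` in the digraph of `A`
(recorded as the list of its `n` vertices, with the closing edge from the
last vertex back to the first). -/
def isClosedWalk {d : ℕ} (A : Fin d → Fin d → Bool) (n : ℕ) (l : List (Fin d)) : Prop :=
  l.length = n ∧ l.Chain' (adjB A) ∧ ∃ h : l ≠ [], adjB A (l.getLast h) (l.head h)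

/-- `l` is a based closed walk of length `n` whose unique right free vertex is the last one. -/
def isXiWalk {d : ℕ} (A : Fin d → Fin d → Bool) (n : ℕ) (l : List (Fin d)) : Prop :=
  isClosedWalk A n l ∧ rfAt A l (n - 1) ∧ ∀ k < n - 1, ¬ rfAt A l k

/-- `ξ_n`: the number of based closed walks of length `n` whose unique right free
vertex is the last one. -/
noncomputable def xiCount {d : ℕ} (A : Fin d → Fin d → Bool) (n : ℕ) : ℕ :=
  {l : List (Fin d) | isXiWalk A n l}.ncard

/-- `G = ⟨Σ | R_A⟩` has a finite representation: there are only finitely many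
reduced words containing no right free generator except possibly at the last position. -/
def FiniteRep {d : ℕ} (A : Fin d → Fin d → Bool) : Prop :=
  {l : List (Fin d) | l ≠ [] ∧ l.Chain' (adjB A) ∧ ∀ k < l.length - 1, ¬ rfAt A l k}.Finite

/-- Every cycle in the digraph of `A` passes through a right free vertex. -/
def CyclesHitRF {d : ℕ} (A : Fin d → Fin d → Bool) : Prop :=
  ∀ l : List (Fin d), l.Chain' (adjB A) →
    (∃ h : l ≠ [], adjB A (l.getLast h) (l.head h)) → ∃ k, rfAt A l k

/-- The 0-1 matrix of `A` with natural number entries. -/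
def AmatN {d : ℕ} (A : Fin d → Fin d → Bool) : Matrix (Fin d) (Fin d) ℕ :=
  Matrix.of fun i j => if A i j then 1 else 0

/-- The 0-1 matrix of `A` with real entries. -/
def AmatR {d : ℕ} (A : Fin d → Fin d → Bool) : Matrix (Fin d) (Fin d) ℝ :=
  Matrix.of fun i j => if A i j then 1 else 0

/-- `T(Ξ_n)`: all cyclic rotations of the walks in `Ξ_n`. -/
def rotSet {d : ℕ} (A : Fin d → Fin d → Bool) (n : ℕ) : Set (List (Fin d)) :=
  {x | ∃ l, isXiWalk A n l ∧ ∃ i, i < n ∧ x = l.drop i ++ l.take i}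

/-- `L(P_m, Ξ_l)`: walks obtained from a based closed walk `u` of length `m` and a
walk `v ∈ Ξ_l` by inserting `v` into `u` immediately after the first right free
vertex of `u` (at 0-based position `s`). -/
def insSet {d : ℕ} (A : Fin d → Fin d → Bool) (m l0 : ℕ) : Set (List (Fin d)) :=
  {x | ∃ u v s, isClosedWalk A m u ∧ isXiWalk A l0 v ∧ rfAt A u s ∧
    (∀ k < s, ¬ rfAt A u k) ∧ x = u.take (s + 1) ++ v ++ u.drop (s + 1)}

/-!
Cut `x` after its first right-free vertex `x_s` and after its second one `x_r`: `x = a ++ v ++ c`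
with `v = x_{s+1} ⋯ x_r ∈ Ξ_{r-s}`. Since the last letter of `a` is right-free it may be followed
by anything, so `a ++ c` is still a closed walk, of length `n - (r - s)`, and its first right-free
vertex is still `x_s`. Conversely, inserting `v ∈ Ξ_l` right after the first right-free vertex of
`u` leaves that vertex first, and the next right-free vertex is the last letter of `v`, `l`
positions further on.
-/

section

variable {d : ℕ} {A : Fin d → Fin d → Bool}

lemma rfAt_iff_getElem? {l : List (Fin d)} {k : ℕ} :
    rfAt A l k ↔ ∃ i ∈ l[k]?, rfB A i := by
  constructor
  · rintro ⟨h, hrf⟩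
    exact ⟨l[k], List.getElem?_eq_getElem h, hrf⟩
  · rintro ⟨i, hi, hrf⟩
    obtain ⟨h, rfl⟩ := List.getElem?_eq_some_iff.mp hi
    exact ⟨h, hrf⟩

lemma rfAt_append_left {l₁ l₂ : List (Fin d)} {k : ℕ} (h : k < l₁.length) :
    rfAt A (l₁ ++ l₂) k ↔ rfAt A l₁ k := by
  simp only [rfAt_iff_getElem?, List.getElem?_append_left h]

lemma rfAt_drop {l : List (Fin d)} {m k : ℕ} : rfAt A (l.drop m) k ↔ rfAt A l (m + k) := by
  simp only [rfAt_iff_getElem?, List.getElem?_drop]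

lemma rfAt_length_sub_one_iff {l : List (Fin d)} (h : l ≠ []) :
    rfAt A l (l.length - 1) ↔ rfB A (l.getLast h) := by
  simp only [rfAt, List.get_eq_getElem, List.getLast_eq_getElem]
  exact ⟨fun ⟨_, hrf⟩ => hrf, fun hrf => ⟨by simpa [Nat.pos_iff_ne_zero] using h, hrf⟩⟩

lemma ne_nil_of_rfAt {l : List (Fin d)} {k : ℕ} (h : rfAt A l k) : l ≠ [] :=
  List.ne_nil_of_length_pos (Nat.zero_lt_of_lt h.1)

lemma isChain_append_of_rfB_getLast {a c : List (Fin d)} (ha : a.IsChain (adjB A))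
    (hc : c.IsChain (adjB A)) (hlast : ∀ h : a ≠ [], rfB A (a.getLast h)) :
    (a ++ c).IsChain (adjB A) :=
  ha.append hc fun x hx y _ => by
    obtain ⟨h, rfl⟩ := List.mem_getLast?_eq_getLast hx
    exact hlast h y

lemma isClosedWalk_of_rfAt_length_sub_one {l : List (Fin d)} (hch : l.IsChain (adjB A))
    (hrf : rfAt A l (l.length - 1)) : isClosedWalk A l.length l :=
  have hne := ne_nil_of_rfAt hrf
  ⟨rfl, hch, hne, (rfAt_length_sub_one_iff hne).1 hrf _⟩

lemma isClosedWalk_append_of_append_append {n : ℕ} {a v c : List (Fin d)}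
    (hx : isClosedWalk A n (a ++ v ++ c)) (ha : rfAt A a (a.length - 1)) :
    isClosedWalk A (n - v.length) (a ++ c) := by
  obtain ⟨hlen, hch, hne, hclose⟩ := hx
  have ha0 := ne_nil_of_rfAt ha
  have hlast := (rfAt_length_sub_one_iff ha0).1 ha
  refine ⟨by simp only [List.length_append] at hlen ⊢; omega,
    isChain_append_of_rfB_getLast (hch.left_of_append.left_of_append) hch.right_of_append
      fun _ => hlast,
    List.append_ne_nil_of_left_ne_nil ha0 _, ?_⟩
  rw [List.head_append_of_ne_nil ha0]
  rcases eq_or_ne c [] with rfl | hc0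
  · rw [List.getLast_append_left _ rfl]
    exact hlast _
  · rw [List.getLast_append_of_ne_nil _ hc0, List.head_append_of_ne_nil
      (List.append_ne_nil_of_left_ne_nil ha0 _), List.head_append_of_ne_nil ha0] at hclose
    rwa [List.getLast_append_of_ne_nil _ hc0]

def IsFirstRFPos (A : Fin d → Fin d → Bool) (l : List (Fin d)) (s : ℕ) : Prop :=
  rfAt A l s ∧ ∀ k < s, ¬ rfAt A l k

lemma IsFirstRFPos.unique {l : List (Fin d)} {s t : ℕ} (hs : IsFirstRFPos A l s)
    (ht : IsFirstRFPos A l t) : s = t := by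
  by_contra hne
  rcases Nat.lt_or_gt_of_ne hne with h | h
  · exact ht.2 s h hs.1
  · exact hs.2 t h ht.1

lemma isFirstRFPos_append_iff {a w : List (Fin d)} {s : ℕ} (h : s < a.length) :
    IsFirstRFPos A (a ++ w) s ↔ IsFirstRFPos A a s := by
  unfold IsFirstRFPos
  rw [rfAt_append_left h]
  exact and_congr_right fun _ =>
    forall₂_congr fun _ hk => not_congr (rfAt_append_left (hk.trans h))

lemma IsFirstRFPos.take {w : List (Fin d)} {s : ℕ} (h : IsFirstRFPos A w s) :
    IsFirstRFPos A (w.take (s + 1)) s :=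
  (isFirstRFPos_append_iff (by simpa using h.1.1)).1 (by rwa [List.take_append_drop])

lemma isXiWalk_take_of_isFirstRFPos {w : List (Fin d)} {s : ℕ} (hch : w.IsChain (adjB A))
    (h : IsFirstRFPos A w s) : isXiWalk A (s + 1) (w.take (s + 1)) := by
  have hlen : (w.take (s + 1)).length = s + 1 := List.length_take_of_le h.1.1
  have hclosed := isClosedWalk_of_rfAt_length_sub_one (hch.infix (List.take_prefix _ _).isInfix)
    (by rw [hlen]; exact h.take.1)
  rw [hlen] at hclosed
  exact ⟨hclosed, h.take⟩

lemma mem_insSet_iff {x : List (Fin d)} {m l : ℕ} :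
    x ∈ insSet A m l ↔ ∃ s a v c, a.length = s + 1 ∧ IsFirstRFPos A a s ∧
      isClosedWalk A m (a ++ c) ∧ isXiWalk A l v ∧ x = a ++ v ++ c := by
  constructor
  · rintro ⟨u, v, s, hu, hv, hs, hsmin, rfl⟩
    refine ⟨s, u.take (s + 1), v, u.drop (s + 1), List.length_take_of_le hs.1,
      IsFirstRFPos.take ⟨hs, hsmin⟩, by rwa [List.take_append_drop], hv, rfl⟩
  · rintro ⟨s, a, v, c, hlen, ha, hu, hv, rfl⟩
    have hu_first := (isFirstRFPos_append_iff (w := c) (by omega)).2 ha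
    exact ⟨a ++ c, v, s, hu, hv, hu_first.1, hu_first.2,
      by rw [List.take_left' hlen, List.drop_left' hlen]⟩

lemma mem_insSet_of_isFirstRFPos {n s j : ℕ} {x : List (Fin d)} (hx : isClosedWalk A n x)
    (hs : IsFirstRFPos A x s) (hr : IsFirstRFPos A (x.drop (s + 1)) j) :
    x ∈ insSet A (n - (j + 1)) (j + 1) := by
  have ha_len : (x.take (s + 1)).length = s + 1 := List.length_take_of_le hs.1.1
  have hv_len : ((x.drop (s + 1)).take (j + 1)).length = j + 1 := List.length_take_of_le hr.1.1
  have hu := isClosedWalk_append_of_append_append (a := x.take (s + 1))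
    (v := (x.drop (s + 1)).take (j + 1)) (c := (x.drop (s + 1)).drop (j + 1))
    (by simpa only [List.append_assoc, List.take_append_drop] using hx)
    (by rw [ha_len]; exact hs.take.1)
  rw [hv_len] at hu
  exact mem_insSet_iff.2 ⟨s, _, _, _, ha_len, hs.take, hu,
    isXiWalk_take_of_isFirstRFPos (hx.2.1.infix (List.drop_suffix _ _).isInfix) hr,
    by simp only [List.append_assoc, List.take_append_drop]⟩

lemma isFirstRFPos_drop_of_mem_insSet {m l s : ℕ} {x : List (Fin d)} (hs : IsFirstRFPos A x s)
    (hx : x ∈ insSet A m l) : 0 < l ∧ IsFirstRFPos A (x.drop (s + 1)) (l - 1) := by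
  obtain ⟨s', a, v, c, hlen, ha, -, hv, rfl⟩ := mem_insSet_iff.1 hx
  rw [List.append_assoc] at hs ⊢
  obtain rfl : s' = s := ((isFirstRFPos_append_iff (by omega)).2 ha).unique hs
  have hv_len : v.length = l := hv.1.1
  have hl : l - 1 < v.length := hv.2.1.1
  rw [List.drop_left' hlen, isFirstRFPos_append_iff hl]
  exact ⟨by omega, hv.2⟩

end

theorem first_second_free_distance_general {d : ℕ} (A : Fin d → Fin d → Bool)
    (n l : ℕ) (x : List (Fin d))
    (hx : isClosedWalk A n x)
    (s r : ℕ) (hs : rfAt A x s) (hsmin : ∀ k < s, ¬ rfAt A x k)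
    (hr : rfAt A x r) (hsr : s < r) (hrmin : ∀ k, s < k → k < r → ¬ rfAt A x k) :
    r - s = l ↔ x ∈ insSet A (n - l) l := by
  obtain ⟨j, rfl⟩ := Nat.exists_eq_add_of_lt hsr
  have hfirst : IsFirstRFPos A x s := ⟨hs, hsmin⟩
  have hsecond : IsFirstRFPos A (x.drop (s + 1)) j :=
    ⟨rfAt_drop.2 (by rwa [Nat.add_right_comm]), fun k hk h =>
      hrmin (s + 1 + k) (by omega) (by omega) (rfAt_drop.1 h)⟩
  constructor
  · rintro rfl
    rw [show s + j + 1 - s = j + 1 by omega]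
    exact mem_insSet_of_isFirstRFPos hx hfirst hsecond
  · intro hmem
    obtain ⟨hl, hdrop⟩ := isFirstRFPos_drop_of_mem_insSet hfirst hmem
    have := hdrop.unique hsecond
    omega

/-- **Lemma 3.4.** Suppose every cycle of the digraph of `A` passes
through a right free vertex.  Let `x ∈ P_n` be a based closed walk whose first and
second right free positions are `s` and `r` (0-based).  Then `r − s = l` if and
only if `x ∈ L(P_{n−l}, Ξ_l)`. -/
theorem first_second_free_distance {d : ℕ} (A : Fin d → Fin d → Bool)
    (hcyc : CyclesHitRF A) (n l : ℕ) (x : List (Fin d))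
    (hx : isClosedWalk A n x)
    (s r : ℕ) (hs : rfAt A x s) (hsmin : ∀ k < s, ¬ rfAt A x k)
    (hr : rfAt A x r) (hsr : s < r) (hrmin : ∀ k, s < k → k < r → ¬ rfAt A x k) :
    r - s = l ↔ x ∈ insSet A (n - l) l :=
  first_second_free_distance_general A n l x hx s r hs hsmin hr hsr hrmin
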